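/- arXiv:1910.02317 — 4 statements merged into one kernel-verified Lean document; each statement's English description precedes it below -/
import Mathlib

section
/- Let Q be a positive definite real n×n matrix, let α > 0, and let A₀ be a real n×n matrix such that the matrix A₀ Q + Q A₀ᵀ + 2α Q is negative semidefinite. Let ε : ℝ → (Fin n → ℝ) be differentiable with ε'(t) = A₀ ε(t) for all t. Then for all t ≥ 0, ε(t)ᵀ Q⁻¹ ε(t) ≤ e^{−2αt} · ε(0)ᵀ Q⁻¹ ε(0); equivalently, ‖ε(t)‖_q ≤ e^{−αt} ‖ε(0)‖_q. -/
/-!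
Conjugating the LMI by `P = Q⁻¹` turns it into `P A₀ + A₀ᵀ P + 2αP ⪯ 0`, which says exactly that
the Lyapunov function `V(t) = ε(t)ᵀ P ε(t)` satisfies `V' ≤ -2αV` along solutions of `ε' = A₀ ε`.
Grönwall's inequality then gives `V(t) ≤ e^{-2αt} V(0)`, and taking square roots gives the bound on
`‖ε(t)‖_q`.
-/

open Matrix

/-- The vector norm `‖x‖_q = √(xᵀ Q⁻¹ x)` associated to a positive definite matrix `Q`. -/
noncomputable def quadNorm {n : ℕ} (Q : Matrix (Fin n) (Fin n) ℝ) (x : Fin n → ℝ) : ℝ :=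
  Real.sqrt (x ⬝ᵥ Q⁻¹.mulVec x)

section Calculus

variable {𝕜 ι : Type*} [NontriviallyNormedField 𝕜] [Fintype ι]

theorem HasDerivAt.dotProduct {f g : 𝕜 → ι → 𝕜} {f' g' : ι → 𝕜} {t : 𝕜}
    (hf : HasDerivAt f f' t) (hg : HasDerivAt g g' t) :
    HasDerivAt (fun s => f s ⬝ᵥ g s) (f' ⬝ᵥ g t + f t ⬝ᵥ g') t := by
  have hcoord : ∀ i ∈ Finset.univ, HasDerivAt (fun s => f s i * g s i)
      (f' i * g t i + f t i * g' i) t :=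
    fun i _ => (hasDerivAt_pi.1 hf i).mul (hasDerivAt_pi.1 hg i)
  have hsum := HasDerivAt.fun_sum hcoord
  rw [Finset.sum_add_distrib] at hsum
  exact hsum

theorem HasDerivAt.mulVec {f : 𝕜 → ι → 𝕜} {f' : ι → 𝕜} {t : 𝕜} (M : Matrix ι ι 𝕜)
    (hf : HasDerivAt f f' t) : HasDerivAt (fun s => M *ᵥ f s) (M *ᵥ f') t :=
  hasDerivAt_pi.2 fun i => by
    have hrow := (hasDerivAt_const t (M i)).dotProduct hf
    rw [zero_dotProduct, zero_add] at hrow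
    exact hrow

end Calculus

theorem le_exp_mul_of_hasDerivAt_le_mul {V V' : ℝ → ℝ} {K : ℝ}
    (hV : ∀ t, HasDerivAt V (V' t) t) (hle : ∀ t, V' t ≤ K * V t) {t : ℝ} (ht : 0 ≤ t) :
    V t ≤ Real.exp (K * t) * V 0 := by
  have hgronwall := le_gronwallBound_of_liminf_deriv_right_le (f := V) (f' := V') (δ := V 0)
    (K := K) (ε := 0) (a := 0) (b := t)
    (fun s _ => (hV s).continuousAt.continuousWithinAt)
    (fun s _ _ hr => (hV s).hasDerivWithinAt.liminf_right_slope_le hr) le_rfl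
    (fun s _ => by simpa using hle s) t ⟨ht, le_rfl⟩
  rwa [gronwallBound_ε0, sub_zero, mul_comm] at hgronwall

theorem Real.sqrt_le_exp_mul_sqrt {a b x : ℝ} (h : a ≤ Real.exp (2 * x) * b) :
    √a ≤ Real.exp x * √b := by
  calc √a ≤ √(Real.exp (2 * x) * b) := Real.sqrt_le_sqrt h
    _ = Real.exp x * √b := by
      rw [Real.sqrt_mul (Real.exp_nonneg _), ← Real.exp_half, mul_div_cancel_left₀ x two_ne_zero]

section Lyapunov

variable {ι : Type*} [Fintype ι]

theorem Matrix.PosSemidef.neg_lyapunov_inv [DecidableEq ι] {Q A : Matrix ι ι ℝ} (hQ : Q.PosDef)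
    {c : ℝ} (h : (-(A * Q + Q * Aᵀ + c • Q)).PosSemidef) :
    (-(Q⁻¹ * A + Aᵀ * Q⁻¹ + c • Q⁻¹)).PosSemidef := by
  have hdet : IsUnit Q.det := (Matrix.isUnit_iff_isUnit_det Q).1 hQ.isUnit
  have hconj := h.mul_mul_conjTranspose_same Q⁻¹
  rw [hQ.inv.isHermitian.eq] at hconj
  convert hconj using 1
  simp only [Matrix.mul_neg, Matrix.neg_mul, Matrix.mul_add, Matrix.add_mul, Matrix.mul_smul,
    Matrix.smul_mul, ← Matrix.mul_assoc, Matrix.nonsing_inv_mul Q hdet, Matrix.one_mul]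
  simp only [Matrix.mul_assoc, Matrix.mul_nonsing_inv Q hdet, Matrix.mul_one]

theorem Matrix.PosSemidef.lyapunov_quadForm_le {P A : Matrix ι ι ℝ} {c : ℝ}
    (h : (-(P * A + Aᵀ * P + c • P)).PosSemidef) (x : ι → ℝ) :
    A *ᵥ x ⬝ᵥ P *ᵥ x + x ⬝ᵥ P *ᵥ (A *ᵥ x) + c * (x ⬝ᵥ P *ᵥ x) ≤ 0 := by
  have hx := h.dotProduct_mulVec_nonneg x
  simp only [star_trivial, Matrix.neg_mulVec, Matrix.add_mulVec, dotProduct_neg, dotProduct_add,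
    Matrix.smul_mulVec, dotProduct_smul, smul_eq_mul, ← Matrix.mulVec_mulVec,
    Matrix.dotProduct_mulVec x Aᵀ, Matrix.vecMul_transpose] at hx
  linarith

end Lyapunov

theorem lyapunov_decay_general (n : ℕ)
    (Q : Matrix (Fin n) (Fin n) ℝ) (hQ : Q.PosDef)
    (α : ℝ)
    (A₀ : Matrix (Fin n) (Fin n) ℝ)
    (hLMI : (-(A₀ * Q + Q * A₀ᵀ + (2 * α) • Q)).PosSemidef)
    (ε : ℝ → (Fin n → ℝ))
    (hε : ∀ t : ℝ, HasDerivAt ε (A₀.mulVec (ε t)) t) :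
    ∀ t : ℝ, 0 ≤ t →
      (ε t ⬝ᵥ Q⁻¹.mulVec (ε t) ≤ Real.exp (-(2 * α) * t) * (ε 0 ⬝ᵥ Q⁻¹.mulVec (ε 0))) ∧
      quadNorm Q (ε t) ≤ Real.exp (-α * t) * quadNorm Q (ε 0) := by
  have hLMI' := hLMI.neg_lyapunov_inv hQ
  have hV : ∀ t, HasDerivAt (fun s => ε s ⬝ᵥ Q⁻¹ *ᵥ ε s)
      (A₀ *ᵥ ε t ⬝ᵥ Q⁻¹ *ᵥ ε t + ε t ⬝ᵥ Q⁻¹ *ᵥ (A₀ *ᵥ ε t)) t :=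
    fun t => (hε t).dotProduct ((hε t).mulVec Q⁻¹)
  have hV_le : ∀ t, A₀ *ᵥ ε t ⬝ᵥ Q⁻¹ *ᵥ ε t + ε t ⬝ᵥ Q⁻¹ *ᵥ (A₀ *ᵥ ε t)
      ≤ -(2 * α) * (ε t ⬝ᵥ Q⁻¹ *ᵥ ε t) := fun t => by
    linarith [hLMI'.lyapunov_quadForm_le (ε t)]
  intro t ht
  have hdecay := le_exp_mul_of_hasDerivAt_le_mul hV hV_le ht
  refine ⟨hdecay, Real.sqrt_le_exp_mul_sqrt ?_⟩
  rwa [show 2 * (-α * t) = -(2 * α) * t by ring]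

/-- if `A₀ Q + Q A₀ᵀ + 2αQ ⪯ 0` and `ε' = A₀ ε`, then the quadratic Lyapunov
function decays as `V_q(ε(t)) ≤ e^{-2αt} V_q(ε(0))`, equivalently
`‖ε(t)‖_q ≤ e^{-αt} ‖ε(0)‖_q`, for all `t ≥ 0`. -/
theorem lyapunov_decay (n : ℕ)
    (Q : Matrix (Fin n) (Fin n) ℝ) (hQ : Q.PosDef)
    (α : ℝ) (hα : 0 < α)
    (A₀ : Matrix (Fin n) (Fin n) ℝ)
    (hLMI : (-(A₀ * Q + Q * A₀ᵀ + (2 * α) • Q)).PosSemidef)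
    (ε : ℝ → (Fin n → ℝ))
    (hε : ∀ t : ℝ, HasDerivAt ε (A₀.mulVec (ε t)) t) :
    ∀ t : ℝ, 0 ≤ t →
      (ε t ⬝ᵥ Q⁻¹.mulVec (ε t) ≤ Real.exp (-(2 * α) * t) * (ε 0 ⬝ᵥ Q⁻¹.mulVec (ε 0))) ∧
      quadNorm Q (ε t) ≤ Real.exp (-α * t) * quadNorm Q (ε 0) :=
  lyapunov_decay_general n Q hQ α A₀ hLMI ε hε
end

section
/- Let Q be a positive definite real n×n matrix, α > 0, and A₀ a real n×n matrix with A₀ Q + Q A₀ᵀ + 2α Q negative semidefinite. Let x, x̂ : ℝ → (Fin n → ℝ) be differentiable functions such that the error ε(t) = x(t) − x̂(t) satisfies ε'(t) = A₀ ε(t) for all t. Let v_1, …, v_N : ℝ → (Fin n → ℝ) and suppose that for every t ≥ 0, x̂(t) lies in the convex hull of {v_1(t), …, v_N(t)}. Then for every t ≥ 0 there exists an index i ∈ {1, …, N} such that ‖x(t)‖_q ≤ ‖v_i(t)‖_q + e^{−αt} ‖x(0) − x̂(0)‖_q. -/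
open Matrix

/-!
Conjugating the LMI by `Q⁻¹` gives `d/dt V(ε) ≤ -2α V(ε)` for the Lyapunov function
`V(z) = zᵀ Q⁻¹ z`, so Grönwall yields `‖ε(t)‖_q ≤ e^{-αt} ‖ε(0)‖_q`. Since `‖·‖_q` is the
Euclidean norm after the linear map `√(Q⁻¹)`, it is convex and subadditive: on the convex hull of
the `v_i(t)` it is maximised at some vertex, and `x = x̂ + ε` finishes the bound.
-/

open Real

section QuadraticForm

variable {ι : Type*} [Fintype ι]

open scoped MatrixOrder in
theorem Matrix.PosSemidef.exists_sqrt_dotProduct_mulVec_eq_norm [DecidableEq ι] {M : Matrix ι ι ℝ}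
    (hM : M.PosSemidef) :
    ∃ L : (ι → ℝ) →ₗ[ℝ] EuclideanSpace ℝ ι, ∀ z, √(z ⬝ᵥ M *ᵥ z) = ‖L z‖ := by
  set S := CFC.sqrt M
  have hS : Sᵀ = S := by
    rw [← conjTranspose_eq_transpose_of_trivial, (CFC.sqrt_nonneg M).posSemidef.isHermitian.eq]
  refine ⟨(WithLp.linearEquiv 2 ℝ (ι → ℝ)).symm.toLinearMap ∘ₗ S.mulVecLin, fun z => ?_⟩
  have hMz : z ⬝ᵥ M *ᵥ z = (S *ᵥ z) ⬝ᵥ (S *ᵥ z) := by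
    rw [← CFC.sqrt_mul_sqrt_self M hM.nonneg, ← mulVec_mulVec, dotProduct_mulVec,
      ← vecMul_transpose, hS]
  rw [hMz, EuclideanSpace.norm_eq]
  simp [dotProduct, pow_two]

theorem hasDerivAt_dotProduct_mulVec (M : Matrix ι ι ℝ) {f : ℝ → ι → ℝ} {f' : ι → ℝ} {t : ℝ}
    (hf : HasDerivAt f f' t) :
    HasDerivAt (fun s => f s ⬝ᵥ M *ᵥ f s) (f' ⬝ᵥ M *ᵥ f t + f t ⬝ᵥ M *ᵥ f') t := by
  have hfi := hasDerivAt_pi.mp hf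
  have h : HasDerivAt (fun s => ∑ j, ∑ k, f s j * (M j k * f s k))
      (∑ j, ∑ k, (f' j * (M j k * f t k) + f t j * (M j k * f' k))) t :=
    .fun_sum fun j _ => .fun_sum fun k _ => (hfi j).mul ((hfi k).const_mul (M j k))
  convert h using 1
  · simp only [dotProduct, mulVec, Finset.mul_sum]
  · simp only [dotProduct, mulVec, Finset.mul_sum, Finset.sum_add_distrib]

end QuadraticForm

section QuadNorm

variable {n : ℕ} {Q : Matrix (Fin n) (Fin n) ℝ}

theorem exists_quadNorm_eq_norm (hQ : Q.PosSemidef) :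
    ∃ L : (Fin n → ℝ) →ₗ[ℝ] EuclideanSpace ℝ (Fin n), ∀ z, quadNorm Q z = ‖L z‖ :=
  hQ.inv.exists_sqrt_dotProduct_mulVec_eq_norm

theorem quadNorm_add_le (hQ : Q.PosSemidef) (a b : Fin n → ℝ) :
    quadNorm Q (a + b) ≤ quadNorm Q a + quadNorm Q b := by
  obtain ⟨L, hL⟩ := exists_quadNorm_eq_norm hQ
  simpa only [hL, map_add] using norm_add_le (L a) (L b)

theorem convexOn_quadNorm (hQ : Q.PosSemidef) : ConvexOn ℝ Set.univ (quadNorm Q) := by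
  obtain ⟨L, hL⟩ := exists_quadNorm_eq_norm hQ
  rw [show quadNorm Q = (‖·‖) ∘ L from funext hL, ← Set.preimage_univ (f := L)]
  exact (convexOn_norm convex_univ).comp_linearMap L

end QuadNorm

theorem le_mul_exp_of_hasDerivAt_le_mul {f f' : ℝ → ℝ} {c : ℝ} (hf : ∀ s, HasDerivAt f (f' s) s)
    (hf' : ∀ s, f' s ≤ c * f s) {t : ℝ} (ht : 0 ≤ t) : f t ≤ f 0 * exp (c * t) := by
  have h := le_gronwallBound_of_liminf_deriv_right_le (f' := f') (δ := f 0) (K := c) (ε := 0)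
    (a := 0) (b := t) (fun s _ => (hf s).continuousAt.continuousWithinAt)
    (fun s _ _ hr => (hf s).hasDerivWithinAt.liminf_right_slope_le hr) le_rfl
    (fun s _ => by simpa using hf' s) t ⟨ht, le_rfl⟩
  rwa [sub_zero, gronwallBound_ε0] at h

section Lyapunov

variable {ι : Type*} [Fintype ι] [DecidableEq ι] {Q A : Matrix ι ι ℝ} {c : ℝ}

theorem Matrix.PosDef.posSemidef_neg_inv_lyapunov (hQ : Q.PosDef)
    (hLMI : (-(A * Q + Q * Aᵀ + c • Q)).PosSemidef) :
    (-(Q⁻¹ * A + Aᵀ * Q⁻¹ + c • Q⁻¹)).PosSemidef := by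
  have hdet : IsUnit Q.det := isUnit_iff_ne_zero.mpr hQ.det_pos.ne'
  have h := hLMI.mul_mul_conjTranspose_same Q⁻¹
  rw [hQ.inv.isHermitian.eq] at h
  convert h using 1
  simp only [Matrix.mul_neg, Matrix.neg_mul, Matrix.mul_add, Matrix.add_mul, Matrix.mul_assoc,
    Matrix.mul_smul, Matrix.smul_mul, mul_nonsing_inv Q hdet, Matrix.mul_one]
  simp only [← Matrix.mul_assoc, nonsing_inv_mul Q hdet, Matrix.one_mul]

theorem Matrix.PosDef.lyapunov_dotProduct_inv_le (hQ : Q.PosDef)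
    (hLMI : (-(A * Q + Q * Aᵀ + c • Q)).PosSemidef) (z : ι → ℝ) :
    (A *ᵥ z) ⬝ᵥ Q⁻¹ *ᵥ z + z ⬝ᵥ Q⁻¹ *ᵥ (A *ᵥ z) ≤ -c * (z ⬝ᵥ Q⁻¹ *ᵥ z) := by
  have h := (hQ.posSemidef_neg_inv_lyapunov hLMI).dotProduct_mulVec_nonneg z
  simp only [star_trivial, neg_mulVec, add_mulVec, dotProduct_neg, dotProduct_add, smul_mulVec,
    dotProduct_smul, ← mulVec_mulVec, smul_eq_mul] at h
  rw [dotProduct_mulVec z Aᵀ, vecMul_transpose] at h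
  linarith

end Lyapunov

theorem quadNorm_le_exp_mul_of_hasDerivAt {n : ℕ} {Q A : Matrix (Fin n) (Fin n) ℝ} {α : ℝ}
    (hQ : Q.PosDef) (hLMI : (-(A * Q + Q * Aᵀ + (2 * α) • Q)).PosSemidef)
    {ε : ℝ → Fin n → ℝ} (hε : ∀ t, HasDerivAt ε (A *ᵥ ε t) t) {t : ℝ} (ht : 0 ≤ t) :
    quadNorm Q (ε t) ≤ exp (-α * t) * quadNorm Q (ε 0) := by
  set V : ℝ → ℝ := fun s => ε s ⬝ᵥ Q⁻¹ *ᵥ ε s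
  have hV : V t ≤ V 0 * exp (-α * t) ^ 2 := by
    rw [← exp_nat_mul]
    convert le_mul_exp_of_hasDerivAt_le_mul (fun s => hasDerivAt_dotProduct_mulVec Q⁻¹ (hε s))
      (fun s => hQ.lyapunov_dotProduct_inv_le hLMI (ε s)) ht using 3
    push_cast
    ring
  calc quadNorm Q (ε t) = √(V t) := rfl
    _ ≤ √(V 0 * exp (-α * t) ^ 2) := sqrt_le_sqrt hV
    _ = exp (-α * t) * quadNorm Q (ε 0) := by
      rw [sqrt_mul' _ (sq_nonneg _), sqrt_sq (exp_nonneg _), mul_comm]; rfl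

theorem barrier_bound_quad_general (n N : ℕ)
    (Q : Matrix (Fin n) (Fin n) ℝ) (hQ : Q.PosDef)
    (α : ℝ)
    (A₀ : Matrix (Fin n) (Fin n) ℝ)
    (hLMI : (-(A₀ * Q + Q * A₀ᵀ + (2 * α) • Q)).PosSemidef)
    (x xhat : ℝ → (Fin n → ℝ))
    (hε : ∀ t : ℝ, HasDerivAt (fun s => x s - xhat s) (A₀.mulVec (x t - xhat t)) t)
    (v : Fin N → ℝ → (Fin n → ℝ))
    (hhull : ∀ t : ℝ, 0 ≤ t → xhat t ∈ convexHull ℝ (Set.range fun i => v i t)) :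
    ∀ t : ℝ, 0 ≤ t → ∃ i : Fin N,
      quadNorm Q (x t) ≤ quadNorm Q (v i t) + Real.exp (-α * t) * quadNorm Q (x 0 - xhat 0) := by
  intro t ht
  obtain ⟨_, ⟨i, rfl⟩, hi⟩ :=
    (convexOn_quadNorm hQ.posSemidef).exists_ge_of_mem_convexHull (Set.subset_univ _) (hhull t ht)
  refine ⟨i, ?_⟩
  calc quadNorm Q (x t) = quadNorm Q (xhat t + (x t - xhat t)) := by rw [add_sub_cancel]
    _ ≤ quadNorm Q (xhat t) + quadNorm Q (x t - xhat t) := quadNorm_add_le hQ.posSemidef _ _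
    _ ≤ quadNorm Q (v i t) + exp (-α * t) * quadNorm Q (x 0 - xhat 0) :=
      add_le_add hi (quadNorm_le_exp_mul_of_hasDerivAt hQ hLMI hε ht)

/-- Theorem 1: if the estimation error `ε = x - x̂` obeys `ε' = A₀ ε` with
`A₀ Q + Q A₀ᵀ + 2αQ ⪯ 0`, and the estimate `x̂(t)` lies in the convex hull of the
vertices `v_i(t)`, then for every `t ≥ 0` there is a vertex `i` with
`‖x(t)‖_q ≤ ‖v_i(t)‖_q + e^{-αt} ‖x(0) - x̂(0)‖_q`. -/
theorem barrier_bound_quad (n N : ℕ) (hN : 0 < N)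
    (Q : Matrix (Fin n) (Fin n) ℝ) (hQ : Q.PosDef)
    (α : ℝ) (hα : 0 < α)
    (A₀ : Matrix (Fin n) (Fin n) ℝ)
    (hLMI : (-(A₀ * Q + Q * A₀ᵀ + (2 * α) • Q)).PosSemidef)
    (x xhat : ℝ → (Fin n → ℝ))
    (hx : Differentiable ℝ x) (hxhat : Differentiable ℝ xhat)
    (hε : ∀ t : ℝ, HasDerivAt (fun s => x s - xhat s) (A₀.mulVec (x t - xhat t)) t)
    (v : Fin N → ℝ → (Fin n → ℝ))
    (hhull : ∀ t : ℝ, 0 ≤ t → xhat t ∈ convexHull ℝ (Set.range fun i => v i t)) :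
    ∀ t : ℝ, 0 ≤ t → ∃ i : Fin N,
      quadNorm Q (x t) ≤ quadNorm Q (v i t) + Real.exp (-α * t) * quadNorm Q (x 0 - xhat 0) :=
  barrier_bound_quad_general n N Q hQ α A₀ hLMI x xhat hε v hhull
end

section
/- Let Q_1, …, Q_m be positive definite real n×n matrices and let V_c(x) = min over γ in the standard simplex of xᵀ (∑_j γ_j Q_j)⁻¹ x be the composite quadratic Lyapunov function. Then the unit sublevel set {x : V_c(x) ≤ 1} equals the convex hull of the union of the ellipsoids {x : xᵀ Q_j⁻¹ x ≤ 1} for j = 1, …, m. -/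
/-!
Write `P_γ = ∑ j, γ j • Q j`. The map `(x, P) ↦ xᵀ P⁻¹ x` is jointly convex on positive definite
`P`, being the supremum over `y` of the affine maps `2 ⟨x, y⟩ - yᵀ P y`; since the infimum over the
compact simplex is attained, `V_c` is convex, and it is at most `xᵀ Q_j⁻¹ x` (take `γ` a vertex),
so its unit sublevel set is a convex set containing every `Ω_j`.

Conversely, if `xᵀ P_γ⁻¹ x ≤ 1` at a minimiser `γ`, put `y = P_γ⁻¹ x`, so `x = ∑ j, γ j • Q_j y`.
Each `Q_j y` equals `√(yᵀ Q_j y) • z_j` with `z_j ∈ Ω_j`, and by concavity of `√` the weights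
satisfy `∑ j, γ j √(yᵀ Q_j y) ≤ √(yᵀ P_γ y) = √(xᵀ P_γ⁻¹ x) ≤ 1`. As `0` lies in the hull,
so does `x`.
-/

open Matrix

noncomputable def compQuad {m n : ℕ} (Q : Fin m → Matrix (Fin n) (Fin n) ℝ)
    (x : Fin n → ℝ) : ℝ :=
  sInf ((fun γ : Fin m → ℝ => x ⬝ᵥ ((∑ j, γ j • Q j)⁻¹).mulVec x) '' stdSimplex ℝ (Fin m))

open Finset Set

lemma Convex.sum_smul_mem_of_zero_mem {𝕜 ι E : Type*} [Field 𝕜] [LinearOrder 𝕜]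
    [IsStrictOrderedRing 𝕜] [AddCommGroup E] [Module 𝕜 E] {s : Set E}
    (hs : Convex 𝕜 s) (h0 : (0 : E) ∈ s) {t : Finset ι} {w : ι → 𝕜} {z : ι → E}
    (hw₀ : ∀ i ∈ t, 0 ≤ w i) (hw₁ : ∑ i ∈ t, w i ≤ 1) (hz : ∀ i ∈ t, z i ∈ s) :
    ∑ i ∈ t, w i • z i ∈ s := by
  rcases (sum_nonneg hw₀).eq_or_lt with hsum | hsum
  · rw [sum_eq_zero fun i hi => by rw [(sum_eq_zero_iff_of_nonneg hw₀).mp hsum.symm i hi,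
      zero_smul]]
    exact h0
  · have hcm : ∑ i ∈ t, w i • z i = (∑ i ∈ t, w i) • t.centerMass w z := by
      rw [centerMass, smul_smul, mul_inv_cancel₀ hsum.ne', one_smul]
    rw [hcm]
    exact hs.smul_mem_of_zero_mem h0 (hs.centerMass_mem hw₀ hsum hz) ⟨hsum.le, hw₁⟩

namespace Matrix

variable {ι n : Type*} [Fintype ι]

lemma posDef_sum_smul_of_mem_stdSimplex {Q : ι → Matrix n n ℝ} (hQ : ∀ j, (Q j).PosDef)
    {γ : ι → ℝ} (hγ : γ ∈ stdSimplex ℝ ι) : (∑ j, γ j • Q j).PosDef := by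
  rw [← sum_filter_of_ne (p := fun j => γ j ≠ 0) fun j _ h hγj => h (by rw [hγj, zero_smul])]
  obtain ⟨j, -, hj⟩ := exists_ne_zero_of_sum_ne_zero (hγ.2.trans_ne one_ne_zero)
  refine posDef_sum ⟨j, by simpa using hj⟩ fun i hi => (hQ i).smul ?_
  exact (hγ.1 i).lt_of_ne' (mem_filter.mp hi).2

variable [Fintype n]

lemma PosDef.exists_eq_sqrt_smul {A : Matrix n n ℝ} (hA : A.PosDef) (w : n → ℝ) :
    ∃ z, z ⬝ᵥ A *ᵥ z ≤ 1 ∧ w = √(w ⬝ᵥ A *ᵥ w) • z := by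
  rcases eq_or_ne w 0 with rfl | hw
  · exact ⟨0, by simp, by simp⟩
  have hpos : 0 < w ⬝ᵥ A *ᵥ w := hA.dotProduct_mulVec_pos hw
  refine ⟨(√(w ⬝ᵥ A *ᵥ w))⁻¹ • w, le_of_eq ?_, ?_⟩
  · simp only [mulVec_smul, dotProduct_smul, smul_dotProduct, smul_eq_mul]
    field_simp
    rw [Real.sq_sqrt hpos.le]
  · rw [smul_smul, mul_inv_cancel₀ (Real.sqrt_pos.mpr hpos).ne', one_smul]

variable [DecidableEq n]

lemma mulVec_nonsing_inv_mulVec {A : Matrix n n ℝ} (hA : IsUnit A.det) (x : n → ℝ) :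
    A *ᵥ (A⁻¹ *ᵥ x) = x := by
  rw [mulVec_mulVec, mul_nonsing_inv A hA, one_mulVec]

lemma dotProduct_nonsing_inv_mulVec_mulVec {A : Matrix n n ℝ} (hA : IsUnit A.det) (y : n → ℝ) :
    (A *ᵥ y) ⬝ᵥ A⁻¹ *ᵥ (A *ᵥ y) = y ⬝ᵥ A *ᵥ y := by
  rw [mulVec_mulVec, nonsing_inv_mul A hA, one_mulVec, dotProduct_comm]

lemma PosDef.two_mul_dotProduct_le {P : Matrix n n ℝ} (hP : P.PosDef) (x y : n → ℝ) :
    2 * (x ⬝ᵥ y) ≤ x ⬝ᵥ P⁻¹ *ᵥ x + y ⬝ᵥ P *ᵥ y := by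
  have hdet : IsUnit P.det := hP.det_pos.ne'.isUnit
  obtain ⟨u, rfl⟩ : ∃ u, P *ᵥ u = x := ⟨P⁻¹ *ᵥ x, mulVec_nonsing_inv_mulVec hdet x⟩
  have hsymm : u ⬝ᵥ P *ᵥ y = (P *ᵥ u) ⬝ᵥ y := by
    rw [dotProduct_mulVec, ← mulVec_transpose, show Pᵀ = P from hP.isHermitian.eq]
  have hsq := hP.posSemidef.dotProduct_mulVec_nonneg (y - u)
  rw [dotProduct_nonsing_inv_mulVec_mulVec hdet]
  simp only [star_trivial, mulVec_sub, sub_dotProduct, dotProduct_sub] at hsq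
  rw [hsymm, dotProduct_comm y (P *ᵥ u)] at hsq
  linarith

lemma PosDef.dotProduct_inv_mulVec_smul_add_le {P P' : Matrix n n ℝ} (hP : P.PosDef)
    (hP' : P'.PosDef) {a b : ℝ} (ha : 0 ≤ a) (hb : 0 ≤ b) (hR : IsUnit (a • P + b • P').det)
    (x x' : n → ℝ) :
    (a • x + b • x') ⬝ᵥ (a • P + b • P')⁻¹ *ᵥ (a • x + b • x') ≤
      a * (x ⬝ᵥ P⁻¹ *ᵥ x) + b * (x' ⬝ᵥ P'⁻¹ *ᵥ x') := by
  set R := a • P + b • P'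
  set z := a • x + b • x'
  -- `y = R⁻¹ z` is the maximiser in `zᵀ R⁻¹ z = max_y (2 ⟨z, y⟩ - yᵀ R y)`.
  obtain ⟨y, hy⟩ : ∃ y, R *ᵥ y = z := ⟨R⁻¹ *ᵥ z, mulVec_nonsing_inv_mulVec hR z⟩
  have hz : z ⬝ᵥ R⁻¹ *ᵥ z = 2 * (z ⬝ᵥ y) - y ⬝ᵥ R *ᵥ y := by
    rw [← hy, dotProduct_nonsing_inv_mulVec_mulVec hR, dotProduct_comm (R *ᵥ y)]
    ring
  have hzy : z ⬝ᵥ y = a * (x ⬝ᵥ y) + b * (x' ⬝ᵥ y) := by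
    simp only [z, add_dotProduct, smul_dotProduct, smul_eq_mul]
  have hyRy : y ⬝ᵥ R *ᵥ y = a * (y ⬝ᵥ P *ᵥ y) + b * (y ⬝ᵥ P' *ᵥ y) := by
    simp only [R, add_mulVec, smul_mulVec, dotProduct_add, dotProduct_smul, smul_eq_mul]
  rw [hz, hzy, hyRy]
  linarith [mul_le_mul_of_nonneg_left (hP.two_mul_dotProduct_le x y) ha,
    mul_le_mul_of_nonneg_left (hP'.two_mul_dotProduct_le x' y) hb]

end Matrix

section

variable {ι n : Type*} [Fintype ι] [Fintype n] [DecidableEq n]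

lemma mem_convexHull_iUnion_of_dotProduct_inv_mulVec_le_one {Q : ι → Matrix n n ℝ}
    (hQ : ∀ j, (Q j).PosDef) {γ : ι → ℝ} (hγ : γ ∈ stdSimplex ℝ ι) {x : n → ℝ}
    (hx : x ⬝ᵥ (∑ j, γ j • Q j)⁻¹ *ᵥ x ≤ 1) :
    x ∈ convexHull ℝ (⋃ j, {x : n → ℝ | x ⬝ᵥ (Q j)⁻¹ *ᵥ x ≤ 1}) := by
  set P := ∑ j, γ j • Q j
  have hPdet : IsUnit P.det := (posDef_sum_smul_of_mem_stdSimplex hQ hγ).det_pos.ne'.isUnit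
  have hQdet : ∀ j, IsUnit (Q j).det := fun j => (hQ j).det_pos.ne'.isUnit
  obtain ⟨y, rfl⟩ : ∃ y, P *ᵥ y = x := ⟨P⁻¹ *ᵥ x, mulVec_nonsing_inv_mulVec hPdet x⟩
  rw [dotProduct_nonsing_inv_mulVec_mulVec hPdet] at hx
  set a : ι → ℝ := fun j => y ⬝ᵥ Q j *ᵥ y
  have ha : ∀ j, 0 ≤ a j := fun j => (hQ j).posSemidef.dotProduct_mulVec_nonneg y
  choose z hzΩ hz using fun j => (hQ j).inv.exists_eq_sqrt_smul (Q j *ᵥ y)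
  simp only [dotProduct_nonsing_inv_mulVec_mulVec (hQdet _)] at hz
  have hPy : P *ᵥ y = ∑ j, (γ j * √(a j)) • z j := by
    simp only [P, sum_mulVec, smul_mulVec]
    exact sum_congr rfl fun j _ => by rw [hz j, mul_smul]
  have hweights : ∑ j, γ j * √(a j) ≤ 1 := calc
    ∑ j, γ j * √(a j) ≤ √(∑ j, γ j * a j) :=
      Real.strictConcaveOn_sqrt.concaveOn.le_map_sum (fun j _ => hγ.1 j) hγ.2
        fun j _ => ha j
    _ = √(y ⬝ᵥ P *ᵥ y) := by
      simp only [P, a, sum_mulVec, dotProduct_sum, smul_mulVec, dotProduct_smul, smul_eq_mul]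
    _ ≤ 1 := Real.sqrt_le_one.mpr hx
  have h0 : (0 : n → ℝ) ∈ convexHull ℝ (⋃ j, {x : n → ℝ | x ⬝ᵥ (Q j)⁻¹ *ᵥ x ≤ 1}) := by
    obtain ⟨j, -⟩ := exists_ne_zero_of_sum_ne_zero (hγ.2.trans_ne one_ne_zero)
    exact subset_convexHull ℝ _ (mem_iUnion.mpr ⟨j, by simp⟩)
  rw [hPy]
  exact (convex_convexHull ℝ _).sum_smul_mem_of_zero_mem h0
    (fun j _ => mul_nonneg (hγ.1 j) (Real.sqrt_nonneg _)) hweights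
    fun j _ => subset_convexHull ℝ _ (mem_iUnion.mpr ⟨j, hzΩ j⟩)

lemma continuousOn_dotProduct_inv_sum_smul_mulVec {Q : ι → Matrix n n ℝ}
    (hQ : ∀ j, (Q j).PosDef) (x : n → ℝ) :
    ContinuousOn (fun γ : ι → ℝ => x ⬝ᵥ (∑ j, γ j • Q j)⁻¹ *ᵥ x) (stdSimplex ℝ ι) := by
  have hdet : ∀ γ ∈ stdSimplex ℝ ι, (∑ j, γ j • Q j).det ≠ 0 := fun γ hγ =>
    (posDef_sum_smul_of_mem_stdSimplex hQ hγ).det_pos.ne'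
  simp only [Matrix.inv_def, Ring.inverse_eq_inv']
  fun_prop (disch := assumption)

end

section

variable {m n : ℕ} {Q : Fin m → Matrix (Fin n) (Fin n) ℝ}

lemma compQuad_le (hQ : ∀ j, (Q j).PosDef) {γ : Fin m → ℝ} (hγ : γ ∈ stdSimplex ℝ (Fin m))
    (x : Fin n → ℝ) : compQuad Q x ≤ x ⬝ᵥ (∑ j, γ j • Q j)⁻¹ *ᵥ x := by
  refine csInf_le ⟨0, ?_⟩ ⟨γ, hγ, rfl⟩
  rintro _ ⟨γ', hγ', rfl⟩
  exact (posDef_sum_smul_of_mem_stdSimplex hQ hγ').inv.posSemidef.dotProduct_mulVec_nonneg x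

lemma compQuad_le_dotProduct_inv_mulVec (hQ : ∀ j, (Q j).PosDef) (j : Fin m) (x : Fin n → ℝ) :
    compQuad Q x ≤ x ⬝ᵥ (Q j)⁻¹ *ᵥ x := by
  simpa [Pi.single_apply] using compQuad_le hQ (single_mem_stdSimplex ℝ j) x

lemma exists_compQuad_eq (hm : 0 < m) (hQ : ∀ j, (Q j).PosDef) (x : Fin n → ℝ) :
    ∃ γ ∈ stdSimplex ℝ (Fin m), compQuad Q x = x ⬝ᵥ (∑ j, γ j • Q j)⁻¹ *ᵥ x := by
  obtain ⟨γ, hγ, hmin⟩ := (isCompact_stdSimplex ℝ (Fin m)).exists_isMinOn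
    ⟨_, single_mem_stdSimplex ℝ ⟨0, hm⟩⟩ (continuousOn_dotProduct_inv_sum_smul_mulVec hQ x)
  refine ⟨γ, hγ, (compQuad_le hQ hγ x).antisymm (le_csInf ⟨_, γ, hγ, rfl⟩ ?_)⟩
  rintro _ ⟨γ', hγ', rfl⟩
  exact hmin hγ'

lemma convexOn_compQuad (hm : 0 < m) (hQ : ∀ j, (Q j).PosDef) : ConvexOn ℝ univ (compQuad Q) := by
  refine ⟨convex_univ, fun x _ x' _ a b ha hb hab => ?_⟩
  obtain ⟨γ, hγ, hx⟩ := exists_compQuad_eq hm hQ x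
  obtain ⟨γ', hγ', hx'⟩ := exists_compQuad_eq hm hQ x'
  have hmix := convex_stdSimplex ℝ (Fin m) hγ hγ' ha hb hab
  have hsum : ∑ j, (a • γ + b • γ') j • Q j = a • ∑ j, γ j • Q j + b • ∑ j, γ' j • Q j := by
    simp only [Pi.add_apply, Pi.smul_apply, smul_eq_mul, add_smul, mul_smul, smul_sum,
      sum_add_distrib]
  have hdet : IsUnit (a • ∑ j, γ j • Q j + b • ∑ j, γ' j • Q j).det :=
    hsum ▸ (posDef_sum_smul_of_mem_stdSimplex hQ hmix).det_pos.ne'.isUnit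
  calc compQuad Q (a • x + b • x')
      ≤ (a • x + b • x') ⬝ᵥ (∑ j, (a • γ + b • γ') j • Q j)⁻¹ *ᵥ (a • x + b • x') :=
        compQuad_le hQ hmix _
    _ ≤ a * (x ⬝ᵥ (∑ j, γ j • Q j)⁻¹ *ᵥ x) + b * (x' ⬝ᵥ (∑ j, γ' j • Q j)⁻¹ *ᵥ x') := by
        rw [hsum]
        exact (posDef_sum_smul_of_mem_stdSimplex hQ hγ).dotProduct_inv_mulVec_smul_add_le
          (posDef_sum_smul_of_mem_stdSimplex hQ hγ') ha hb hdet x x'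
    _ = a • compQuad Q x + b • compQuad Q x' := by rw [hx, hx', smul_eq_mul, smul_eq_mul]

end

/-- the unit sublevel set of the composite quadratic Lyapunov function equals
the convex hull of the union of the ellipsoids `{x | xᵀ Q_j⁻¹ x ≤ 1}`. -/
theorem compQuad_unit_sublevel_eq_convexHull (m n : ℕ) (hm : 0 < m)
    (Q : Fin m → Matrix (Fin n) (Fin n) ℝ) (hQ : ∀ j, (Q j).PosDef) :
    {x : Fin n → ℝ | compQuad Q x ≤ 1} =
      convexHull ℝ (⋃ j : Fin m, {x : Fin n → ℝ | x ⬝ᵥ (Q j)⁻¹.mulVec x ≤ 1}) := by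
  apply Set.Subset.antisymm
  · intro x hx
    obtain ⟨γ, hγ, hxγ⟩ := exists_compQuad_eq hm hQ x
    exact mem_convexHull_iUnion_of_dotProduct_inv_mulVec_le_one hQ hγ (hxγ ▸ hx)
  · refine convexHull_min ?_ (by simpa using (convexOn_compQuad hm hQ).convex_le 1)
    rintro x ⟨_, ⟨j, rfl⟩, hx⟩
    exact (compQuad_le_dotProduct_inv_mulVec hQ j x).trans hx
end

section
/- Let A₀ be a real n×n matrix all of whose (complex) eigenvalues have strictly negative real part. Let f : ℝ → (Fin n → ℝ) be continuous and let x, x̂ : ℝ → (Fin n → ℝ) be differentiable functions satisfying x'(t) = A₀ x(t) + f(t) and x̂'(t) = A₀ x̂(t) + f(t) for all t. Then x(t) − x̂(t) = exp(t A₀) (x(0) − x̂(0)) for all t, and there exist constants C ≥ 0 and β > 0 such that ‖x(t) − x̂(t)‖ ≤ C e^{−βt} ‖x(0) − x̂(0)‖ for all t ≥ 0; in particular x(t) − x̂(t) converges to 0 exponentially. -/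
/-!
The error `ε = x - x̂` solves `ε' = A₀ ε`, and so does `t ↦ exp (t • A₀) *ᵥ ε 0`; uniqueness of
solutions of Lipschitz ODEs gives the formula. For the decay, complexify and split `ε 0` into
generalized eigenvectors of `A₀`: on the generalized eigenspace of `μ`, `exp (t • A₀)` acts as
`exp (t * μ)` times a polynomial in `t`, which is `O(exp (-β * t))` for every `β < -μ.re`.
The spectrum is finite, so one `β > 0` serves all eigenvalues, and bounding the columns of
`exp (t • A₀)` makes the constant uniform in the initial vector.
-/

open Matrix

/-- The Euclidean norm on `Fin n → ℝ`. -/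
noncomputable def euclNorm {n : ℕ} (v : Fin n → ℝ) : ℝ :=
  Real.sqrt (∑ i, v i ^ 2)

open NormedSpace Finset
open scoped Nat

theorem exists_norm_mulVec_le_mul_norm {𝕜 α ι : Type*} [NormedField 𝕜] [Fintype ι]
    [DecidableEq ι] {M : α → Matrix ι ι 𝕜} {g : α → ℝ} {s : Set α}
    (h : ∀ i, ∃ C, 0 ≤ C ∧ ∀ a ∈ s, ‖M a *ᵥ Pi.single i 1‖ ≤ C * g a) :
    ∃ C, 0 ≤ C ∧ ∀ a ∈ s, ∀ v, ‖M a *ᵥ v‖ ≤ C * g a * ‖v‖ := by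
  choose C hC0 hC using h
  refine ⟨∑ i, C i, sum_nonneg fun i _ => hC0 i, fun a ha v => ?_⟩
  have hv : M a *ᵥ v = ∑ i, v i • (M a *ᵥ Pi.single i 1) := by
    conv_lhs => rw [pi_eq_sum_univ' v]
    simp only [mulVec_sum, mulVec_smul]
  calc ‖M a *ᵥ v‖ ≤ ∑ i, ‖v i‖ * ‖M a *ᵥ Pi.single i 1‖ :=
        hv ▸ norm_sum_le_of_le _ fun i _ => (norm_smul _ _).le
    _ ≤ ∑ i, ‖v‖ * (C i * g a) :=
        sum_le_sum fun i _ => mul_le_mul (norm_le_pi_norm v i) (hC i a ha) (norm_nonneg _)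
          (norm_nonneg _)
    _ = (∑ i, C i) * g a * ‖v‖ := by rw [← mul_sum, ← sum_mul, mul_comm]

theorem exists_pos_forall_lt_neg_re {s : Set ℂ} (hs : s.Finite) (h : ∀ μ ∈ s, μ.re < 0) :
    ∃ β, 0 < β ∧ ∀ μ ∈ s, β < -μ.re :=
  ((hs.eventually_all.2 fun μ hμ => eventually_lt_nhds (neg_pos.2 (h μ hμ))).filter_mono
    nhdsWithin_le_nhds |>.and (self_mem_nhdsWithin (s := Set.Ioi 0))).exists.imp fun _ h => h.symm

theorem pow_div_factorial_le_mul_exp {γ t : ℝ} (hγ : 0 < γ) (ht : 0 ≤ t) (k : ℕ) :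
    t ^ k / k ! ≤ γ⁻¹ ^ k * Real.exp (γ * t) := by
  have h := Real.pow_div_factorial_le_exp _ (mul_nonneg hγ.le ht) k
  calc t ^ k / k ! = γ⁻¹ ^ k * ((γ * t) ^ k / k !) := by
        rw [mul_pow, ← mul_div_assoc, ← mul_assoc, ← mul_pow, inv_mul_cancel₀ hγ.ne', one_pow,
          one_mul]
    _ ≤ γ⁻¹ ^ k * Real.exp (γ * t) := by gcongr

section MatrixExp

variable {ι : Type*} [Fintype ι] [DecidableEq ι]

-- `exp` on matrices depends only on the topology; a Banach-algebra norm is fixed just to use the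
-- normed-algebra API for `exp`.
attribute [local instance] Matrix.linftyOpNormedRing Matrix.linftyOpNormedAlgebra

theorem exp_mulVec_eq_sum_of_pow_mulVec_eq_zero {𝕜 : Type*} [RCLike 𝕜] {N : Matrix ι ι 𝕜}
    {w : ι → 𝕜} {m : ℕ} (hw : N ^ m *ᵥ w = 0) :
    exp N *ᵥ w = ∑ k ∈ range m, (k !⁻¹ : 𝕜) • (N ^ k *ᵥ w) := by
  have hsum := (exp_series_hasSum_exp' (𝕂 := 𝕜) N).map (mulVec.addMonoidHomLeft w)
    (continuous_id.matrix_mulVec continuous_const)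
  refine hsum.unique (hasSum_sum_of_ne_finset_zero (s := range m) fun k hk => ?_) |>.trans ?_
  · obtain ⟨j, rfl⟩ : ∃ j, k = j + m := ⟨k - m, by grind⟩
    change (_ • N ^ (j + m)) *ᵥ w = 0
    rw [smul_mulVec, pow_add, ← mulVec_mulVec, hw, mulVec_zero, smul_zero]
  · exact sum_congr rfl fun k _ => smul_mulVec _ _ _

theorem exp_smul_mulVec_eq_sum {B : Matrix ι ι ℂ} {μ : ℂ} {w : ι → ℂ} {m : ℕ}
    (hw : (B - μ • 1) ^ m *ᵥ w = 0) (t : ℂ) :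
    exp (t • B) *ᵥ w =
      Complex.exp (t * μ) • ∑ k ∈ range m, (t ^ k / k !) • ((B - μ • 1) ^ k *ᵥ w) := by
  have hsplit : t • B = algebraMap ℂ _ (t * μ) + t • (B - μ • 1) := by
    rw [Algebra.algebraMap_eq_smul_one, smul_sub, smul_smul]; abel
  have hscalar : exp (algebraMap ℂ (Matrix ι ι ℂ) (t * μ)) = algebraMap ℂ _ (exp (t * μ)) :=
    (algebraMap_exp_comm _).symm
  have hN : (t • (B - μ • 1)) ^ m *ᵥ w = 0 := by rw [smul_pow, smul_mulVec, hw, smul_zero]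
  rw [hsplit, Matrix.exp_add_of_commute _ _ (Algebra.commute_algebraMap_left _ _), hscalar,
    ← mulVec_mulVec, exp_mulVec_eq_sum_of_pow_mulVec_eq_zero hN, Complex.exp_eq_exp_ℂ,
    Algebra.algebraMap_eq_smul_one, smul_mulVec, one_mulVec]
  congr 1
  refine sum_congr rfl fun k _ => ?_
  rw [smul_pow, smul_mulVec, smul_smul, div_eq_inv_mul]

theorem exists_norm_exp_smul_mulVec_le_of_pow_mulVec_eq_zero {B : Matrix ι ι ℂ} {μ : ℂ}
    {w : ι → ℂ} {m : ℕ} (hw : (B - μ • 1) ^ m *ᵥ w = 0) {β : ℝ} (hβ : β < -μ.re) :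
    ∃ C, 0 ≤ C ∧ ∀ t : ℝ, 0 ≤ t → ‖exp ((t : ℂ) • B) *ᵥ w‖ ≤ C * Real.exp (-β * t) := by
  set γ := -μ.re - β
  have hγ : 0 < γ := sub_pos.2 hβ
  refine ⟨∑ k ∈ range m, γ⁻¹ ^ k * ‖(B - μ • 1) ^ k *ᵥ w‖, by positivity, fun t ht => ?_⟩
  rw [exp_smul_mulVec_eq_sum hw, norm_smul, Complex.norm_exp, sum_mul]
  refine (mul_le_mul_of_nonneg_left (norm_sum_le _ _) (Real.exp_nonneg _)).trans ?_
  refine (mul_sum _ _ _).le.trans (sum_le_sum fun k _ => ?_)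
  have hre : ((t : ℂ) * μ).re = -γ * t - β * t := by rw [Complex.re_ofReal_mul]; ring
  calc Real.exp ((t : ℂ) * μ).re * ‖((t : ℂ) ^ k / k !) • ((B - μ • 1) ^ k *ᵥ w)‖
      = t ^ k / k ! * Real.exp (-(γ * t)) * Real.exp (-β * t) * ‖(B - μ • 1) ^ k *ᵥ w‖ := by
        rw [norm_smul, hre, sub_eq_add_neg, Real.exp_add]
        simp only [neg_mul, Complex.norm_div, norm_pow, Complex.norm_real, Real.norm_eq_abs,
          abs_of_nonneg ht, RCLike.norm_natCast]
        ring
    _ ≤ γ⁻¹ ^ k * Real.exp (γ * t) * Real.exp (-(γ * t)) * Real.exp (-β * t)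
          * ‖(B - μ • 1) ^ k *ᵥ w‖ := by
        gcongr
        exact pow_div_factorial_le_mul_exp hγ ht k
    _ = γ⁻¹ ^ k * ‖(B - μ • 1) ^ k *ᵥ w‖ * Real.exp (-β * t) := by
        rw [mul_assoc (γ⁻¹ ^ k), ← Real.exp_add, add_neg_cancel, Real.exp_zero]
        ring

theorem exists_norm_exp_smul_mulVec_le {B : Matrix ι ι ℂ} {β : ℝ}
    (hβ : ∀ μ ∈ spectrum ℂ B, β < -μ.re) (v : ι → ℂ) :
    ∃ C, 0 ≤ C ∧ ∀ t : ℝ, 0 ≤ t → ‖exp ((t : ℂ) • B) *ᵥ v‖ ≤ C * Real.exp (-β * t) := by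
  have hv : v ∈ ⨆ μ, Module.End.maxGenEigenspace (toLin' B) μ := by
    rw [Module.End.iSup_maxGenEigenspace_eq_top]; trivial
  induction hv using Submodule.iSup_induction' with
  | mem μ w hw =>
    by_cases hw0 : w = 0
    · exact ⟨0, le_rfl, by simp [hw0]⟩
    have hμ : μ ∈ spectrum ℂ B := by
      have : Module.End.HasUnifEigenvalue (toLin' B) μ ⊤ :=
        Submodule.ne_bot_iff _ |>.2 ⟨w, hw, hw0⟩
      simpa using ((Module.End.hasUnifEigenvalue_iff_hasUnifEigenvalue_one (by simp)).1
        this).mem_spectrum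
    obtain ⟨m, hm⟩ := (Module.End.mem_maxGenEigenspace _ _ _).1 hw
    have hm' : (B - μ • 1) ^ m *ᵥ w = 0 := by
      rwa [← toLin'_apply, toLin'_pow, map_sub, map_smul, toLin'_one]
    exact exists_norm_exp_smul_mulVec_le_of_pow_mulVec_eq_zero hm' (hβ μ hμ)
  | zero => exact ⟨0, le_rfl, by simp⟩
  | add v w _ _ hv hw =>
    obtain ⟨Cv, hCv, hv⟩ := hv
    obtain ⟨Cw, hCw, hw⟩ := hw
    refine ⟨Cv + Cw, add_nonneg hCv hCw, fun t ht => ?_⟩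
    rw [mulVec_add, add_mul]
    exact (norm_add_le _ _).trans (add_le_add (hv t ht) (hw t ht))

theorem exists_pos_norm_exp_smul_mulVec_le_mul_norm {B : Matrix ι ι ℂ}
    (hB : ∀ μ ∈ spectrum ℂ B, μ.re < 0) :
    ∃ β, 0 < β ∧ ∃ C, 0 ≤ C ∧ ∀ t : ℝ, 0 ≤ t → ∀ v,
      ‖exp ((t : ℂ) • B) *ᵥ v‖ ≤ C * Real.exp (-β * t) * ‖v‖ := by
  obtain ⟨β, hβ0, hβ⟩ := exists_pos_forall_lt_neg_re B.finite_spectrum hB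
  exact ⟨β, hβ0, exists_norm_mulVec_le_mul_norm (s := Set.Ici 0) fun i =>
    exists_norm_exp_smul_mulVec_le hβ (Pi.single i 1)⟩

theorem hasDerivAt_exp_smul_mulVec (A : Matrix ι ι ℝ) (w : ι → ℝ) (t : ℝ) :
    HasDerivAt (fun s : ℝ => exp (s • A) *ᵥ w) (A *ᵥ (exp (t • A) *ᵥ w)) t := by
  rw [mulVec_mulVec]
  exact ((mulVec.addMonoidHomLeft w).toRealLinearMap
    (continuous_id.matrix_mulVec continuous_const)).hasFDerivAt.comp_hasDerivAt t
    (hasDerivAt_exp_smul_const' A t)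

theorem eq_exp_smul_mulVec_of_hasDerivAt {A : Matrix ι ι ℝ} {ε : ℝ → ι → ℝ}
    (hε : ∀ t, HasDerivAt ε (A *ᵥ ε t) t) (t : ℝ) : ε t = exp (t • A) *ᵥ ε 0 := by
  have hsol := ODE_solution_unique_univ (v := fun _ => A.mulVecLin) (s := fun _ => Set.univ)
    (t₀ := 0) (fun _ => (LinearMap.toContinuousLinearMap A.mulVecLin).lipschitz.lipschitzOnWith)
    (fun t => ⟨hε t, trivial⟩)
    (fun t => ⟨hasDerivAt_exp_smul_mulVec A (ε 0) t, trivial⟩) (by simp)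
  exact congr_fun hsol t

theorem map_ofReal_exp_smul (A : Matrix ι ι ℝ) (t : ℝ) :
    (exp (t • A)).map Complex.ofReal = exp ((t : ℂ) • A.map Complex.ofReal) := by
  have hsmul : (t • A).map Complex.ofReal = (t : ℂ) • A.map Complex.ofReal := by
    ext; simp
  rw [← hsmul]
  exact map_exp (Complex.ofRealHom.mapMatrix (m := ι))
    (continuous_id.matrix_map Complex.continuous_ofReal) (t • A)

end MatrixExp

theorem norm_le_euclNorm {n : ℕ} (v : Fin n → ℝ) : ‖v‖ ≤ euclNorm v :=
  (pi_norm_le_iff_of_nonneg (Real.sqrt_nonneg _)).2 fun i => Real.abs_le_sqrt <|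
    single_le_sum (f := fun j => v j ^ 2) (fun _ _ => sq_nonneg _) (mem_univ i)

theorem euclNorm_le_sqrt_mul_norm {n : ℕ} (v : Fin n → ℝ) : euclNorm v ≤ √n * ‖v‖ := by
  have h : ∑ i, v i ^ 2 ≤ n * ‖v‖ ^ 2 :=
    calc ∑ i, v i ^ 2 ≤ ∑ _i : Fin n, ‖v‖ ^ 2 :=
          sum_le_sum fun i _ => sq_le_sq.2 (by rw [abs_norm]; exact norm_le_pi_norm v i)
      _ = n * ‖v‖ ^ 2 := by simp
  calc euclNorm v ≤ √(n * ‖v‖ ^ 2) := Real.sqrt_le_sqrt h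
    _ = √n * ‖v‖ := by rw [Real.sqrt_mul n.cast_nonneg, Real.sqrt_sq (norm_nonneg v)]

theorem norm_ofReal_comp {ι : Type*} [Fintype ι] (v : ι → ℝ) : ‖Complex.ofReal ∘ v‖ = ‖v‖ := by
  simp [Pi.norm_def]

theorem estimation_error_exponential_decay_general (n : ℕ)
    (A₀ : Matrix (Fin n) (Fin n) ℝ)
    (hHurwitz : ∀ μ ∈ spectrum ℂ (A₀.map (Complex.ofReal : ℝ → ℂ)), μ.re < 0)
    (f : ℝ → (Fin n → ℝ))
    (x xhat : ℝ → (Fin n → ℝ))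
    (hx : ∀ t : ℝ, HasDerivAt x (A₀.mulVec (x t) + f t) t)
    (hxhat : ∀ t : ℝ, HasDerivAt xhat (A₀.mulVec (xhat t) + f t) t) :
    (∀ t : ℝ, x t - xhat t = (NormedSpace.exp (t • A₀)).mulVec (x 0 - xhat 0)) ∧
    ∃ C : ℝ, 0 ≤ C ∧ ∃ β : ℝ, 0 < β ∧ ∀ t : ℝ, 0 ≤ t →
      euclNorm (x t - xhat t) ≤ C * Real.exp (-β * t) * euclNorm (x 0 - xhat 0) := by
  set ε := fun t => x t - xhat t
  have hε : ∀ t, HasDerivAt ε (A₀ *ᵥ ε t) t := fun t => by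
    have h := (hx t).sub (hxhat t)
    rwa [add_sub_add_right_eq_sub, ← mulVec_sub] at h
  have hsol := eq_exp_smul_mulVec_of_hasDerivAt hε
  refine ⟨hsol, ?_⟩
  obtain ⟨β, hβ, C, hC, hdecay⟩ := exists_pos_norm_exp_smul_mulVec_le_mul_norm hHurwitz
  have hcomplex : ∀ t, Complex.ofReal ∘ ε t =
      exp ((t : ℂ) • A₀.map Complex.ofReal) *ᵥ (Complex.ofReal ∘ ε 0) := fun t => by
    ext i
    rw [← map_ofReal_exp_smul, hsol t]
    exact RingHom.map_mulVec Complex.ofRealHom _ _ i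
  refine ⟨√n * C, by positivity, β, hβ, fun t ht => ?_⟩
  calc euclNorm (ε t) ≤ √n * ‖Complex.ofReal ∘ ε t‖ := by
        rw [norm_ofReal_comp]; exact euclNorm_le_sqrt_mul_norm _
    _ ≤ √n * (C * Real.exp (-β * t) * ‖ε 0‖) := by
        rw [hcomplex, ← norm_ofReal_comp (ε 0)]; gcongr; exact hdecay t ht _
    _ ≤ √n * C * Real.exp (-β * t) * euclNorm (ε 0) := by
        rw [← mul_assoc, ← mul_assoc]; gcongr; exact norm_le_euclNorm _

/-- if `A₀` is Hurwitz (every complex eigenvalue has negative real part) and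
`x`, `x̂` solve the same affine ODE `x' = A₀ x + f`, then
`x(t) - x̂(t) = e^{tA₀}(x(0) - x̂(0))` and the error decays exponentially. -/
theorem estimation_error_exponential_decay (n : ℕ)
    (A₀ : Matrix (Fin n) (Fin n) ℝ)
    (hHurwitz : ∀ μ ∈ spectrum ℂ (A₀.map (Complex.ofReal : ℝ → ℂ)), μ.re < 0)
    (f : ℝ → (Fin n → ℝ)) (hf : Continuous f)
    (x xhat : ℝ → (Fin n → ℝ))
    (hx : ∀ t : ℝ, HasDerivAt x (A₀.mulVec (x t) + f t) t)
    (hxhat : ∀ t : ℝ, HasDerivAt xhat (A₀.mulVec (xhat t) + f t) t) :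
    (∀ t : ℝ, x t - xhat t = (NormedSpace.exp (t • A₀)).mulVec (x 0 - xhat 0)) ∧
    ∃ C : ℝ, 0 ≤ C ∧ ∃ β : ℝ, 0 < β ∧ ∀ t : ℝ, 0 ≤ t →
      euclNorm (x t - xhat t) ≤ C * Real.exp (-β * t) * euclNorm (x 0 - xhat 0) :=
  estimation_error_exponential_decay_general n A₀ hHurwitz f x xhat hx hxhat
end
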